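/- For Poisson point processes on R, if 0 < r < s, then there is no translation-equivariant factor map φ from the intensity-r Poisson process to the intensity-s Poisson process admitting a deterministic constant coding window M: that is, there is no measurable translation-equivariant φ with P_r ∘ φ^{-1} = P_s such that for all μ, μ' agreeing on B(0, M), φ(μ) and φ(μ') agree on B(0,1). -/

import Mathlib

open MeasureTheory ProbabilityTheory

open scoped ENNReal

/-- The Poisson probability of the value `n` for a Poisson random variable of mean `m`. -/
noncomputable def poissonProb (m : ℝ) (n : ℕ) : ℝ≥0∞ :=
  ENNReal.ofReal (Real.exp (-m) * m ^ n / (Nat.factorial n))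

/-- `X` is a Poisson point process of intensity `r` on the Borel set `B ⊆ α` under the
probability measure `μ`: `X` is a random (point) measure supported on `B` such that the
number of points in any finite-volume measurable `C ⊆ B` is Poisson with mean
`r·Leb(C)`, and the counts in any finite family of pairwise disjoint measurable subsets
of `B` are independent. -/
def IsPoissonPP {Ω α : Type*} [MeasurableSpace Ω] [MeasureSpace α]
    (μ : MeasureTheory.Measure Ω) (r : ℝ) (B : Set α) (X : Ω → MeasureTheory.Measure α) :
    Prop :=
  Measurable X ∧
  (∀ᵐ ω ∂μ, X ω Bᶜ = 0) ∧
  (∀ C : Set α, MeasurableSet C → C ⊆ B → MeasureTheory.volume C ≠ ∞ → ∀ n : ℕ,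
    μ {ω | X ω C = (n : ℝ≥0∞)} = poissonProb (r * (MeasureTheory.volume C).toReal) n) ∧
  (∀ m : ℕ, ∀ C : Fin m → Set α, (∀ j, MeasurableSet (C j)) → (∀ j, C j ⊆ B) →
    (Pairwise fun j k => Disjoint (C j) (C k)) →
    ProbabilityTheory.iIndepFun (m := fun _ : Fin m => (inferInstance : MeasurableSpace ℝ≥0∞))
      (fun j ω => X ω (C j)) μ)

/-! If `φ` has coding window `M` and the input has no points in `B(0, M + ℓ)`, equivariance
makes `φ(X)` agree with translates of `φ(0)` throughout `B(0, ℓ + 1)`. On `B(0, 1)` the measure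
`φ(0)` is integer-valued on intervals (it is the output on an event of positive probability)
and invariant under small translations, hence zero. So the output is empty on `B(0, ℓ)` whenever
the input is empty on `B(0, M + ℓ)`, which gives `e^{-2(M+ℓ)r} ≤ e^{-2ℓs}` for every `ℓ ≥ 0`,
impossible when `r < s`. -/

open Set Metric

lemma tsum_poissonProb {m : ℝ} (hm : 0 ≤ m) : ∑' n, poissonProb m n = 1 := by
  have h : HasSum (fun n => Real.exp (-m) * m ^ n / (Nat.factorial n)) 1 :=
    hasSum_one_poissonMeasure ⟨m, hm⟩
  simp only [poissonProb]
  rw [← ENNReal.ofReal_tsum_of_nonneg (fun n => by positivity) h.summable, h.tsum_eq,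
    ENNReal.ofReal_one]

namespace IsPoissonPP

variable {Ω α : Type*} [MeasurableSpace Ω] [MeasureSpace α] {μ : Measure Ω} {r : ℝ}
  {B : Set α} {X : Ω → Measure α}

theorem ae_exists_natCast_eq [IsProbabilityMeasure μ] (hX : IsPoissonPP μ r B X) (hr : 0 ≤ r)
    {C : Set α} (hC : MeasurableSet C) (hCB : C ⊆ B) (hCv : volume C ≠ ∞) :
    ∀ᵐ ω ∂μ, ∃ n : ℕ, X ω C = n := by
  have hmeas : ∀ n : ℕ, MeasurableSet {ω | X ω C = n} := fun n =>
    (Measure.measurable_coe hC).comp hX.1 (measurableSet_singleton _)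
  have hdisj : Pairwise (Function.onFun Disjoint fun n : ℕ => {ω | X ω C = n}) :=
    fun i j hij => disjoint_left.2 fun ω hi hj => hij (Nat.cast_injective (hi.symm.trans hj))
  have hunion : μ (⋃ n : ℕ, {ω | X ω C = n}) = 1 := by
    rw [measure_iUnion hdisj hmeas]
    simp_rw [hX.2.2.1 C hC hCB hCv]
    exact tsum_poissonProb (mul_nonneg hr ENNReal.toReal_nonneg)
  rw [ae_iff]
  refine measure_mono_null (fun ω hω => ?_) ((prob_compl_eq_zero_iff (.iUnion hmeas)).2 hunion)
  simpa using hω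

end IsPoissonPP

theorem IsPoissonPP.measure_setOf_ball_eq_zero {Ω : Type*} [MeasurableSpace Ω] {μ : Measure Ω}
    {r : ℝ} {X : Ω → Measure ℝ} (hX : IsPoissonPP μ r univ X) (x : ℝ) {m : ℝ} (hm : 0 ≤ m) :
    μ {ω | X ω (ball x m) = 0} = ENNReal.ofReal (Real.exp (-(r * (2 * m)))) := by
  have h := hX.2.2.1 (ball x m) measurableSet_ball (subset_univ _) measure_ball_lt_top.ne 0
  rw [Real.volume_ball, ENNReal.toReal_ofReal (by linarith)] at h
  simpa [poissonProb] using h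

section TranslationInvariant

variable {ν : Measure ℝ} {a b : ℝ}

theorem measure_Ioc_add_nsmul
    (hinv : ∀ x y z, x < y → Ioc x y ⊆ Ioo a b → Ioc (x + z) (y + z) ⊆ Ioo a b →
      ν (Ioc (x + z) (y + z)) = ν (Ioc x y))
    {x h : ℝ} (hh : 0 < h) (k : ℕ) (hk : Ioc x (x + k * h) ⊆ Ioo a b) :
    ν (Ioc x (x + k * h)) = k * ν (Ioc x (x + h)) := by
  induction k with
  | zero => simp
  | succ k ih =>
    have hkh : 0 ≤ (k : ℝ) * h := by positivity
    have hsplit : Ioc x (x + (k + 1 : ℕ) * h) =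
        Ioc x (x + k * h) ∪ Ioc (x + k * h) (x + h + k * h) := by
      rw [add_right_comm, Ioc_union_Ioc_eq_Ioc (by linarith) (by linarith)]
      push_cast; ring_nf
    have hfirst : Ioc x (x + h) ⊆ Ioo a b :=
      (Ioc_subset_Ioc_right (by push_cast; linarith)).trans hk
    rw [hsplit] at hk ⊢
    rw [measure_union (Ioc_disjoint_Ioc_of_le le_rfl) measurableSet_Ioc,
      ih (subset_union_left.trans hk),
      hinv x (x + h) (k * h) (by linarith) hfirst (subset_union_right.trans hk)]
    push_cast; ring

theorem measure_Ioc_eq_zero_of_translation_invariant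
    (hnat : ∀ x y, Ioc x y ⊆ Ioo a b → ∃ n : ℕ, ν (Ioc x y) = n)
    (hinv : ∀ x y z, x < y → Ioc x y ⊆ Ioo a b → Ioc (x + z) (y + z) ⊆ Ioo a b →
      ν (Ioc (x + z) (y + z)) = ν (Ioc x y))
    {x y : ℝ} (hxy : Ioc x y ⊆ Ioo a b) : ν (Ioc x y) = 0 := by
  rcases le_or_gt y x with hyx | hxy'
  · simp [Ioc_eq_empty_of_le hyx]
  obtain ⟨n, hn⟩ := hnat x y hxy
  -- `n + 1` translates of one piece make up `Ioc x y`, so `n + 1` divides `n`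
  set h := (y - x) / (n + 1) with hh
  have hpos : 0 < h := by positivity
  have hy : x + (n + 1 : ℕ) * h = y := by rw [hh]; push_cast; field_simp; ring
  have hhy : x + h ≤ y := by rw [← hy]; push_cast; nlinarith [n.cast_nonneg (α := ℝ)]
  obtain ⟨m, hm⟩ := hnat x (x + h) ((Ioc_subset_Ioc_right hhy).trans hxy)
  have hdvd := measure_Ioc_add_nsmul hinv hpos (n + 1) (hy ▸ hxy)
  rw [hy, hn, hm] at hdvd
  norm_cast at hdvd
  rcases m with _ | m
  · simpa [hn] using hdvd
  · nlinarith

theorem measure_Ioo_eq_zero_of_translation_invariant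
    (hnat : ∀ x y, Ioc x y ⊆ Ioo a b → ∃ n : ℕ, ν (Ioc x y) = n)
    (hinv : ∀ x y z, x < y → Ioc x y ⊆ Ioo a b → Ioc (x + z) (y + z) ⊆ Ioo a b →
      ν (Ioc (x + z) (y + z)) = ν (Ioc x y)) :
    ν (Ioo a b) = 0 := by
  refine measure_null_of_locally_null _ fun x hx => ⟨Ioc ((a + x) / 2) ((x + b) / 2), ?_, ?_⟩
  · refine mem_nhdsWithin_of_mem_nhds (Filter.mem_of_superset (Ioo_mem_nhds ?_ ?_)
      Ioo_subset_Ioc_self) <;> linarith [hx.1, hx.2]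
  · exact measure_Ioc_eq_zero_of_translation_invariant hnat hinv fun y hy =>
      ⟨by linarith [hy.1, hx.1], by linarith [hy.2, hx.2]⟩

end TranslationInvariant

def HasCodingWindow (φ : Measure ℝ → Measure ℝ) (M : ℝ) : Prop :=
  ∀ μ μ' : Measure ℝ, μ.restrict (ball 0 M) = μ'.restrict (ball 0 M) →
    (φ μ).restrict (ball 0 1) = (φ μ').restrict (ball 0 1)

namespace HasCodingWindow

variable {φ : Measure ℝ → Measure ℝ} {M : ℝ} {μ : Measure ℝ}

theorem mono (hφ : HasCodingWindow φ M) {M' : ℝ} (h : M ≤ M') : HasCodingWindow φ M' :=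
  fun μ μ' hμ => hφ μ μ' <| by
    rw [← Measure.restrict_restrict_of_subset (ball_subset_ball h), hμ,
      Measure.restrict_restrict_of_subset (ball_subset_ball h)]

theorem apply_eq_of_null (hφ : HasCodingWindow φ M) (hμ : μ (ball 0 M) = 0) {F : Set ℝ}
    (hF : F ⊆ ball 0 1) : φ μ F = φ 0 F := by
  have h := congrArg (· F) (hφ μ 0 (by rw [Measure.restrict_eq_zero.2 hμ, Measure.restrict_zero]))
  simpa [Measure.restrict_apply' measurableSet_ball, inter_eq_self_of_subset_left hF] using h

theorem apply_preimage_add_eq (hφ : HasCodingWindow φ M) {z ℓ : ℝ} (hz : |z| ≤ ℓ)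
    (hequiv : φ (μ.map (· + z)) = (φ μ).map (· + z)) (hμ : μ (ball 0 (M + ℓ)) = 0)
    {F : Set ℝ} (hFm : MeasurableSet F) (hF : F ⊆ ball 0 1) :
    φ μ ((· + z) ⁻¹' F) = φ 0 F := by
  rw [← Measure.map_apply (measurable_add_const z) hFm, ← hequiv]
  refine hφ.apply_eq_of_null ?_ hF
  rw [Measure.map_apply (measurable_add_const z) measurableSet_ball]
  refine measure_mono_null (fun x hx => ?_) hμ
  simp only [mem_preimage, mem_ball, Real.dist_eq, sub_zero] at hx ⊢
  have := abs_sub (x + z) z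
  rw [add_sub_cancel_right] at this
  linarith

theorem zero_apply_Ioc_add (hφ : HasCodingWindow φ M)
    (hequiv : ∀ z, φ (μ.map (· + z)) = (φ μ).map (· + z)) (hμ : μ (ball 0 (M + 2)) = 0)
    {x y z : ℝ} (hxy : x < y) (h : Ioc x y ⊆ ball 0 1) (hz : Ioc (x + z) (y + z) ⊆ ball 0 1) :
    φ 0 (Ioc (x + z) (y + z)) = φ 0 (Ioc x y) := by
  have hy := h (right_mem_Ioc.2 hxy)
  have hyz := hz (right_mem_Ioc.2 (by linarith))
  simp only [mem_ball, Real.dist_eq, sub_zero, abs_lt] at hy hyz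
  calc φ 0 (Ioc (x + z) (y + z)) = φ μ (Ioc (x + z) (y + z)) :=
        (hφ.apply_eq_of_null (measure_mono_null (ball_subset_ball (by linarith)) hμ) hz).symm
    _ = φ μ ((· + -z) ⁻¹' Ioc x y) := by rw [preimage_add_const_Ioc, sub_neg_eq_add, sub_neg_eq_add]
    _ = φ 0 (Ioc x y) :=
        hφ.apply_preimage_add_eq (abs_le.2 ⟨by linarith, by linarith⟩) (hequiv _) hμ
          measurableSet_Ioc h

theorem apply_ball_eq_zero (hφ : HasCodingWindow φ M) (h0 : φ 0 (ball 0 1) = 0)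
    (hequiv : ∀ z, φ (μ.map (· + z)) = (φ μ).map (· + z)) {ℓ : ℝ}
    (hμ : μ (ball 0 (M + ℓ)) = 0) : φ μ (ball 0 ℓ) = 0 := by
  refine measure_null_of_locally_null _ fun x hx =>
    ⟨ball x 1, mem_nhdsWithin_of_mem_nhds (ball_mem_nhds x one_pos), ?_⟩
  have hball : ball x 1 = (· + -x) ⁻¹' ball 0 1 := by
    ext y; simp [Real.dist_eq, sub_eq_add_neg]
  rw [mem_ball, Real.dist_eq, sub_zero] at hx
  rw [hball, hφ.apply_preimage_add_eq (by rw [abs_neg]; exact hx.le) (hequiv _) hμ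
    measurableSet_ball subset_rfl, h0]

end HasCodingWindow

theorem HasCodingWindow.zero_apply_ball_eq_zero {Ω : Type*} [MeasurableSpace Ω] {P : Measure Ω}
    [IsProbabilityMeasure P] {r s M : ℝ} {X : Ω → Measure ℝ} {φ : Measure ℝ → Measure ℝ}
    (hφ : HasCodingWindow φ M) (hM : 0 ≤ M) (hX : IsPoissonPP P r univ X)
    (hY : IsPoissonPP P s univ (fun ω => φ (X ω))) (hs : 0 ≤ s)
    (hequiv : ∀ᵐ ω ∂P, ∀ z, φ ((X ω).map (· + z)) = (φ (X ω)).map (· + z)) :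
    φ 0 (ball 0 1) = 0 := by
  have hempty : ∀ ℓ, 0 ≤ ℓ → P {ω | X ω (ball 0 (M + ℓ)) = 0} ≠ 0 := fun ℓ hℓ => by
    rw [hX.measure_setOf_ball_eq_zero 0 (by linarith)]
    positivity
  have hball : ball (0 : ℝ) 1 = Ioo (-1) 1 := by simp [Real.ball_eq_Ioo]
  rw [hball]
  apply measure_Ioo_eq_zero_of_translation_invariant
  · intro x y hxy
    obtain ⟨ω, hω, n, hn⟩ := Measure.exists_mem_of_measure_ne_zero_of_ae (hempty 0 le_rfl)
      (ae_restrict_of_ae (hY.ae_exists_natCast_eq hs measurableSet_Ioc (subset_univ _)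
        (by simp [Real.volume_Ioc])))
    rw [add_zero] at hω
    exact ⟨n, (hφ.apply_eq_of_null hω (hball ▸ hxy)).symm.trans hn⟩
  · obtain ⟨ω, hω, hωequiv⟩ := Measure.exists_mem_of_measure_ne_zero_of_ae (hempty 2 zero_le_two)
      (ae_restrict_of_ae hequiv)
    intro x y z hxy h hz
    exact hφ.zero_apply_Ioc_add hωequiv hω hxy (hball ▸ h) (hball ▸ hz)

theorem stmt18 {Ω : Type*} [MeasureSpace Ω] [IsProbabilityMeasure (ℙ : Measure Ω)]
    (r s : ℝ) (hr : 0 < r) (hrs : r < s)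
    (X : Ω → Measure ℝ) (hX : IsPoissonPP (ℙ : Measure Ω) r Set.univ X) :
    ¬ ∃ (M : ℝ) (φ : Measure ℝ → Measure ℝ), Measurable φ ∧
        IsPoissonPP (ℙ : Measure Ω) s Set.univ (fun ω => φ (X ω)) ∧
        (∀ᵐ ω ∂(ℙ : Measure Ω), ∀ z : ℝ,
          φ (Measure.map (fun x => x + z) (X ω)) =
            Measure.map (fun x => x + z) (φ (X ω))) ∧
        (∀ μ μ' : Measure ℝ,
          μ.restrict (Metric.ball (0 : ℝ) M) = μ'.restrict (Metric.ball (0 : ℝ) M) →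
          (φ μ).restrict (Metric.ball (0 : ℝ) 1) = (φ μ').restrict (Metric.ball (0 : ℝ) 1)) := by
  rintro ⟨M, φ, -, hY, hequiv, hφ⟩
  have hφ' : HasCodingWindow φ (max M 0) := HasCodingWindow.mono hφ (le_max_left M 0)
  set M' := max M 0
  have hM' : 0 ≤ M' := le_max_right M 0
  have h0 := hφ'.zero_apply_ball_eq_zero hM' hX hY (hr.trans hrs).le hequiv
  set ℓ := r * M' / (s - r) + 1
  have hℓ : 0 ≤ ℓ := by positivity
  have hkey : r * (2 * (M' + ℓ)) < s * (2 * ℓ) := by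
    have : (s - r) * (ℓ - 1) = r * M' := by
      simp only [ℓ, add_sub_cancel_right]; field_simp [(sub_pos.2 hrs).ne']
    nlinarith
  have hle : ℙ {ω | X ω (ball 0 (M' + ℓ)) = 0} ≤ ℙ {ω | φ (X ω) (ball 0 ℓ) = 0} :=
    measure_mono_ae <| by
      filter_upwards [hequiv] with ω hω hempty using hφ'.apply_ball_eq_zero h0 hω hempty
  rw [hX.measure_setOf_ball_eq_zero 0 (by linarith), hY.measure_setOf_ball_eq_zero 0 hℓ,
    ENNReal.ofReal_le_ofReal_iff (Real.exp_pos _).le, Real.exp_le_exp] at hle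
  linarith
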